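/- Let K > k ≥ 1 be integers and ε, ε₁ > 0 with ε₁ ≤ ε and e^{ε₁−ε}(K−k) − 1 > 0. If ε₂ > 0 satisfies e^{ε₂} ≤ (K−k−1)/(e^{ε₁−ε}(K−k) − 1), then (e^{ε₂} + K − k − 1)/((K−k) e^{ε₁+ε₂}) ≥ e^{−ε}. Moreover, (e^{ε₂} + K − k − 1)/((K−k) e^{ε₁+ε₂}) ≤ 1 always holds. -/

import Mathlib

/-!
Write `A = K - k`. Since `exp (-ε) * A * exp (ε₁ + ε₂) = exp ε₂ * (exp (ε₁ - ε) * A)`, the lower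
bound is the hypothesis on `exp ε₂` with the positive denominator cleared. The upper bound holds
because `exp ε₂ + (A - 1) ≤ A * exp ε₂` for `A ≥ 1`, `ε₂ ≥ 0`, and `exp ε₁ ≥ 1`.
-/

open Real

lemma exp_neg_le_exp_add_sub_one_div {A ε ε₁ ε₂ : ℝ} (hA : 0 < A)
    (h : exp ε₂ * (exp (ε₁ - ε) * A - 1) ≤ A - 1) :
    exp (-ε) ≤ (exp ε₂ + (A - 1)) / (A * exp (ε₁ + ε₂)) := by
  have hexp : exp (-ε) * (A * exp (ε₁ + ε₂)) = exp ε₂ * (exp (ε₁ - ε) * A) := by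
    rw [exp_neg, exp_add, exp_sub]
    field_simp
  rw [le_div_iff₀ (by positivity), hexp]
  linarith

lemma exp_add_sub_one_div_le_one {A ε₁ ε₂ : ℝ} (hA : 1 ≤ A) (hε₁ : 0 ≤ ε₁) (hε₂ : 0 ≤ ε₂) :
    (exp ε₂ + (A - 1)) / (A * exp (ε₁ + ε₂)) ≤ 1 := by
  have hb : 1 ≤ exp ε₂ := one_le_exp hε₂
  rw [div_le_one (by positivity)]
  calc exp ε₂ + (A - 1) ≤ A * exp ε₂ := by nlinarith
    _ = A * exp ε₂ * 1 := (mul_one _).symm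
    _ ≤ A * exp ε₂ * exp ε₁ := by gcongr; exact one_le_exp hε₁
    _ = A * exp (ε₁ + ε₂) := by rw [exp_add]; ring

theorem privacy_bound_case_C3_general (K k : ℕ) (hkK : k < K)
    (ε ε₁ ε₂ : ℝ) (hε₁ : 0 < ε₁) (hε₂ : 0 < ε₂)
    (hpos : exp (ε₁ - ε) * ((K : ℝ) - k) - 1 > 0)
    (hbound : exp ε₂ ≤ ((K : ℝ) - k - 1) / (exp (ε₁ - ε) * ((K : ℝ) - k) - 1)) :
    exp (-ε) ≤ (exp ε₂ + ((K : ℝ) - k - 1)) / (((K : ℝ) - k) * exp (ε₁ + ε₂)) ∧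
    (exp ε₂ + ((K : ℝ) - k - 1)) / (((K : ℝ) - k) * exp (ε₁ + ε₂)) ≤ 1 := by
  have hA : 1 ≤ (K : ℝ) - k := by
    have : (k : ℝ) + 1 ≤ K := by exact_mod_cast hkK
    linarith
  exact ⟨exp_neg_le_exp_add_sub_one_div (by linarith) ((le_div_iff₀ hpos).mp hbound),
    exp_add_sub_one_div_le_one hA hε₁.le hε₂.le⟩

theorem privacy_bound_case_C3 (K k : ℕ) (hk : 1 ≤ k) (hkK : k < K)
    (ε ε₁ ε₂ : ℝ) (hε : 0 < ε) (hε₁ : 0 < ε₁) (hε₁ε : ε₁ ≤ ε) (hε₂ : 0 < ε₂)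
    (hpos : exp (ε₁ - ε) * ((K : ℝ) - k) - 1 > 0)
    (hbound : exp ε₂ ≤ ((K : ℝ) - k - 1) / (exp (ε₁ - ε) * ((K : ℝ) - k) - 1)) :
    exp (-ε) ≤ (exp ε₂ + ((K : ℝ) - k - 1)) / (((K : ℝ) - k) * exp (ε₁ + ε₂)) ∧
    (exp ε₂ + ((K : ℝ) - k - 1)) / (((K : ℝ) - k) * exp (ε₁ + ε₂)) ≤ 1 :=
  privacy_bound_case_C3_general K k hkK ε ε₁ ε₂ hε₁ hε₂ hpos hbound
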